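/- Let λ ≥ 1 and let (x_i) be a (finite or infinite) λ-wide-(s) sequence in a real Banach space. Then every convex block basis (u_j) of (x_i) is again λ-wide-(s). -/

import Mathlib

open Finset Filter Metric NormedSpace

noncomputable section

universe u

variable {X Y : Type*} [NormedAddCommGroup X] [NormedSpace ℝ X]
  [NormedAddCommGroup Y] [NormedSpace ℝ Y]

/-- `b` is a `lam`-basic sequence of length `N` (with `N = ⊤` the infinite case). -/
def IsBasicLen (lam : ℝ) (N : ℕ∞) (b : ℕ → X) : Prop :=
  ∀ (c : ℕ → ℝ) (k n : ℕ), k ≤ n → (n : ℕ∞) ≤ N →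
    ‖∑ j ∈ Finset.range k, c j • b j‖ ≤ lam * ‖∑ j ∈ Finset.range n, c j • b j‖

/-- `b` is a `lam`-wide-(s) sequence of length `N` (with `N = ⊤` the infinite case). -/
def IsWideSLen (lam : ℝ) (N : ℕ∞) (b : ℕ → X) : Prop :=
  IsBasicLen (2 * lam) N b ∧ (∀ j : ℕ, (j : ℕ∞) < N → ‖b j‖ ≤ lam) ∧
    ∀ (c : ℕ → ℝ) (k n : ℕ), k ≤ n → (n : ℕ∞) ≤ N →
      |∑ j ∈ Finset.Ico k n, c j| ≤ lam * ‖∑ j ∈ Finset.range n, c j • b j‖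

/-- `u` is a convex block basis (of length `M`) of the sequence `x` of length `N`
(`⊤` denoting the infinite case). -/
def IsConvexBlockBasisLen (M N : ℕ∞) (u x : ℕ → X) : Prop :=
  ∃ (n : ℕ → ℕ) (a : ℕ → ℝ),
    (∀ j : ℕ, (j : ℕ∞) < M → n j < n (j + 1)) ∧
    (∀ j : ℕ, (j : ℕ∞) < M → (n (j + 1) : ℕ∞) ≤ N) ∧
    (∀ i, 0 ≤ a i) ∧
    (∀ j : ℕ, (j : ℕ∞) < M → ∑ i ∈ Finset.Ico (n j) (n (j + 1)), a i = 1) ∧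
    (∀ j : ℕ, (j : ℕ∞) < M → u j = ∑ i ∈ Finset.Ico (n j) (n (j + 1)), a i • x i)

/-!
A linear combination `∑_{j<k} c_j u_j` of the blocks `u_j = ∑_{n_j ≤ i < n_{j+1}} a_i x_i` is the
linear combination of the `x_i` with coefficients `d_i = c_j a_i` (for `i` in the `j`-th block),
taken up to `n_k`; since `∑_i a_i = 1` on each block, also `∑_{i<n_k} d_i = ∑_{j<k} c_j`.
So the basic and wide-(s) inequalities for `(u_j)` at `k ≤ m` are those for `(x_i)` at
`n_k ≤ n_m`, while `‖u_j‖ ≤ λ` holds because the closed `λ`-ball is convex.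
-/

section Blocks

variable {n : ℕ → ℕ} {m : ℕ}

theorem sum_range_eq_add_sum_blocks {Z : Type*} [AddCommMonoid Z] (f : ℕ → Z) :
    ∀ k, (∀ j < k, n j ≤ n (j + 1)) →
      ∑ i ∈ range (n k), f i =
        ∑ i ∈ range (n 0), f i + ∑ j ∈ range k, ∑ i ∈ Ico (n j) (n (j + 1)), f i
  | 0, _ => by simp
  | k + 1, hn => by
    rw [← sum_range_add_sum_Ico _ (hn k k.lt_succ_self),
      sum_range_eq_add_sum_blocks f k fun j hj => hn j (by omega), sum_range_succ, add_assoc]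

def blockCoeff (n : ℕ → ℕ) (m : ℕ) (a c : ℕ → ℝ) (i : ℕ) : ℝ :=
  ∑ j ∈ range m, if i ∈ Ico (n j) (n (j + 1)) then c j * a i else 0

variable {a c : ℕ → ℝ} {i : ℕ}

theorem blockCoeff_eq_zero_of_lt (hn : MonotoneOn n (Set.Iic m)) (hi : i < n 0) :
    blockCoeff n m a c i = 0 := by
  refine sum_eq_zero fun j hj => if_neg fun hij => ?_
  have : n 0 ≤ n j := hn (by simp) (by simp [(mem_range.1 hj).le]) (Nat.zero_le j)
  exact absurd (mem_Ico.1 hij).1 (by omega)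

theorem blockCoeff_eq_of_mem_Ico (hn : MonotoneOn n (Set.Iic m)) {j : ℕ} (hj : j < m)
    (hi : i ∈ Ico (n j) (n (j + 1))) : blockCoeff n m a c i = c j * a i := by
  rw [blockCoeff, sum_eq_single_of_mem j (mem_range.2 hj), if_pos hi]
  intro l hl hlj
  refine if_neg fun hil => ?_
  rw [mem_Ico] at hi hil
  rcases lt_or_gt_of_ne hlj with hlt | hgt
  · have := hn (Set.mem_Iic.2 (by omega)) (Set.mem_Iic.2 hj.le) (show l + 1 ≤ j by omega)
    omega
  · have := hn (Set.mem_Iic.2 (by omega)) (Set.mem_Iic.2 (mem_range.1 hl).le)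
      (show j + 1 ≤ l by omega)
    omega

theorem sum_blockCoeff_smul {Z : Type*} [AddCommMonoid Z] [Module ℝ Z]
    (hn : MonotoneOn n (Set.Iic m)) (x : ℕ → Z) {k : ℕ} (hk : k ≤ m) :
    ∑ i ∈ range (n k), blockCoeff n m a c i • x i =
      ∑ j ∈ range k, c j • ∑ i ∈ Ico (n j) (n (j + 1)), a i • x i := by
  have hstep : ∀ j < k, n j ≤ n (j + 1) := fun j hj =>
    hn (show j ≤ m by omega) (show j + 1 ≤ m by omega) j.le_succ
  rw [sum_range_eq_add_sum_blocks _ k hstep,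
    sum_eq_zero fun i hi => by rw [blockCoeff_eq_zero_of_lt hn (mem_range.1 hi), zero_smul],
    zero_add]
  refine sum_congr rfl fun j hj => ?_
  rw [smul_sum]
  refine sum_congr rfl fun i hi => ?_
  rw [blockCoeff_eq_of_mem_Ico hn (by simp at hj; omega) hi, smul_smul]

end Blocks

theorem IsConvexBlockBasisLen.exists_coeff {M N : ℕ∞} {u x : ℕ → X}
    (hu : IsConvexBlockBasisLen M N u x) (c : ℕ → ℝ) {m : ℕ} (hm : (m : ℕ∞) ≤ M) :
    ∃ (n : ℕ → ℕ) (d : ℕ → ℝ), (∀ k ≤ m, n k ≤ n m) ∧ (n m : ℕ∞) ≤ N ∧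
      (∀ k ≤ m, ∑ i ∈ range (n k), d i • x i = ∑ j ∈ range k, c j • u j) ∧
      ∀ k ≤ m, ∑ i ∈ range (n k), d i = ∑ j ∈ range k, c j := by
  rcases Nat.eq_zero_or_pos m with rfl | hm0
  -- for `m = 0` nothing bounds `n 0` by `N`, so a different `n` is needed
  · exact ⟨fun _ => 0, 0, by simp⟩
  obtain ⟨n, a, hmono, hN, -, hsum, hux⟩ := hu
  have hlt : ∀ j < m, (j : ℕ∞) < M := fun j hj => lt_of_lt_of_le (by exact_mod_cast hj) hm
  have hn : MonotoneOn n (Set.Iic m) :=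
    (strictMonoOn_Iic_of_lt_succ fun j hj => by
      simpa only [Order.succ_eq_add_one] using hmono j (hlt j hj)).monotoneOn
  refine ⟨n, blockCoeff n m a c, fun k hk => hn hk (le_refl m) hk, ?_, fun k hk => ?_,
    fun k hk => ?_⟩
  · simpa only [Nat.sub_add_cancel hm0] using hN (m - 1) (hlt _ (by omega))
  · rw [sum_blockCoeff_smul hn x hk]
    exact sum_congr rfl fun j hj => by rw [hux j (hlt j (by simp at hj; omega))]
  · have h := sum_blockCoeff_smul (a := a) (c := c) hn (fun _ => (1 : ℝ)) hk
    simp only [smul_eq_mul, mul_one] at h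
    rw [h]
    exact sum_congr rfl fun j hj => by rw [hsum j (hlt j (by simp at hj; omega)), mul_one]

theorem stmt_3 (lam : ℝ) (M N : ℕ∞) (x u : ℕ → X)
    (hx : IsWideSLen lam N x) (hu : IsConvexBlockBasisLen M N u x) :
    IsWideSLen lam M u := by
  refine ⟨fun c k m hkm hm => ?_, fun j hj => ?_, fun c k m hkm hm => ?_⟩
  · obtain ⟨n, d, hle, hN, hvec, -⟩ := hu.exists_coeff c hm
    rw [← hvec k hkm, ← hvec m le_rfl]
    exact hx.1 d (n k) (n m) (hle k hkm) hN
  · obtain ⟨n, a, -, hN, ha, hsum, hux⟩ := hu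
    have hxj : ∀ i ∈ Ico (n j) (n (j + 1)), x i ∈ closedBall (0 : X) lam := fun i hi =>
      mem_closedBall_zero_iff.2 <|
        hx.2.1 i (lt_of_lt_of_le (by exact_mod_cast (mem_Ico.1 hi).2) (hN j hj))
    rw [hux j hj, ← mem_closedBall_zero_iff]
    exact (convex_closedBall 0 lam).sum_mem (fun i _ => ha i) (hsum j hj) hxj
  · obtain ⟨n, d, hle, hN, hvec, hscal⟩ := hu.exists_coeff c hm
    rw [sum_Ico_eq_sub _ hkm, ← hscal k hkm, ← hscal m le_rfl, ← sum_Ico_eq_sub _ (hle k hkm),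
      ← hvec m le_rfl]
    exact hx.2.2 d (n k) (n m) (hle k hkm) hN
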